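/- The Fibonacci sequence is cobweb-admissible: every fibonomial coefficient (n choose k)_Fib = (Fib(n)·Fib(n-1)···Fib(n-k+1))/(Fib(k)·Fib(k-1)···Fib(1)) is a nonnegative integer for all 0 ≤ k ≤ n. -/

import Mathlib

/-- Fib-factorial: `n_Fib! = Fib(n)·Fib(n-1)···Fib(1)`, `0_Fib! = 1`. -/
def fibFact (n : ℕ) : ℕ := ∏ i ∈ Finset.range n, Nat.fib (i + 1)

lemma fibFact_pos (n : ℕ) : 0 < fibFact n := by
  apply Finset.prod_pos
  intro i _
  exact Nat.fib_pos.mpr (Nat.succ_pos i)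

lemma fibFact_succ (n : ℕ) : fibFact (n + 1) = Nat.fib (n + 1) * fibFact n := by
  rw [fibFact, fibFact, Finset.prod_range_succ, mul_comm]

lemma fibFact_dvd : ∀ n k, k ≤ n → fibFact k * fibFact (n - k) ∣ fibFact n := by
  intro n
  induction n with
  | zero => intro k hk; interval_cases k; simp [fibFact]
  | succ n ih =>
    intro k hk
    rcases Nat.eq_zero_or_pos k with rfl | hk0
    · simp [fibFact]
    rcases eq_or_lt_of_le hk with rfl | hlt
    · simp [fibFact]
    have hk' : k ≤ n := Nat.lt_succ_iff.mp hlt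
    obtain ⟨k, rfl⟩ := Nat.exists_eq_succ_of_ne_zero hk0.ne'
    -- fib (n+1) = fib k * fib (n+1-(k+1)) + fib (k+1) * fib (n+1-k)
    have hsplit : n + 1 = k + (n - k) + 1 := by omega
    have hfib : Nat.fib (n + 1)
        = Nat.fib k * Nat.fib (n - k) + Nat.fib (k + 1) * Nat.fib (n - k + 1) := by
      conv_lhs => rw [hsplit]
      exact Nat.fib_add k (n - k)
    conv_rhs => rw [fibFact_succ, hfib]
    rw [add_mul]
    apply dvd_add
    · -- first term: fib k * fib (n-k) * fibFact n
      have h1 : fibFact (k + 1) * fibFact (n - (k + 1)) ∣ fibFact n := ih (k + 1) hk'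
      have hpos : 0 < n - k := by omega
      obtain ⟨m, hm⟩ := Nat.exists_eq_succ_of_ne_zero hpos.ne'
      have hm1 : n - (k + 1) = m := by omega
      have hstep : fibFact (k + 1) * fibFact (n + 1 - (k + 1))
          = Nat.fib (n - k) * (fibFact (k + 1) * fibFact (n - (k + 1))) := by
        have hnk : n + 1 - (k + 1) = n - k := by omega
        rw [hnk, hm1, show n - k = m + 1 from by omega, fibFact_succ m]
        ring
      calc fibFact (k + 1) * fibFact (n + 1 - (k + 1))
          ∣ Nat.fib (n - k) * (fibFact (k + 1) * fibFact (n - (k + 1))) := hstep ▸ dvd_refl _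
        _ ∣ Nat.fib (n - k) * fibFact n := mul_dvd_mul_left _ h1
        _ ∣ Nat.fib k * Nat.fib (n - k) * fibFact n := by
            rw [mul_assoc]; exact Dvd.dvd.mul_left (dvd_refl _) _
    · -- second term: fib (k+1) * fib (n-k+1) * fibFact n
      have h2 : fibFact k * fibFact (n - k) ∣ fibFact n := ih k (by omega)
      have hnk : n + 1 - (k + 1) = n - k := by omega
      rw [hnk, fibFact_succ, mul_assoc]
      calc Nat.fib (k + 1) * (fibFact k * fibFact (n - k))
          ∣ Nat.fib (k + 1) * fibFact n := mul_dvd_mul_left _ h2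
        _ ∣ Nat.fib (k + 1) * Nat.fib (n - k + 1) * fibFact n := by
            rw [mul_assoc, mul_comm (Nat.fib (n - k + 1))]
            exact mul_dvd_mul_left _ (dvd_mul_right _ _)

lemma prod_top (n : ℕ) : ∀ k, k ≤ n →
    fibFact n = (∏ i ∈ Finset.range k, Nat.fib (n - i)) * fibFact (n - k) := by
  intro k
  induction k with
  | zero => simp
  | succ k ih =>
    intro hk
    have hk' : k ≤ n := by omega
    rw [ih hk', Finset.prod_range_succ]
    have h1 : n - k = (n - (k + 1)) + 1 := by omega
    rw [h1, fibFact_succ]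
    have h2 : n - (k + 1) + 1 = n - k := by omega
    rw [h2]
    ring

/-- The Fibonacci sequence is cobweb-admissible: every fibonomial coefficient
`(n choose k)_Fib = (Fib(n)···Fib(n-k+1))/(Fib(k)···Fib(1))` is a nonnegative integer. -/
theorem fibonacci_cobweb_admissible (n k : ℕ) (hk : k ≤ n) :
    ∃ N : ℕ, (∏ i ∈ Finset.range k, (Nat.fib (n - i) : ℚ)) =
      (N : ℚ) * ∏ i ∈ Finset.range k, (Nat.fib (i + 1) : ℚ) := by
  obtain ⟨N, hN⟩ := fibFact_dvd n k hk
  refine ⟨N, ?_⟩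
  have key : (∏ i ∈ Finset.range k, Nat.fib (n - i)) * fibFact (n - k)
      = (N * fibFact k) * fibFact (n - k) := by
    rw [← prod_top n k hk, hN]; ring
  have hne : fibFact (n - k) ≠ 0 := (fibFact_pos _).ne'
  have key2 : (∏ i ∈ Finset.range k, Nat.fib (n - i)) = N * fibFact k :=
    Nat.eq_of_mul_eq_mul_right (fibFact_pos _) key
  have := congrArg (fun m : ℕ => (m : ℚ)) key2
  push_cast at this
  rw [this, fibFact]
  push_cast
  ring
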